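/- Let n ≥ 1, λ, μ ∈ ℝⁿ, and let α be a nonzero real number. Assume that the matrix B_{λ,μ} is invertible. Then for every z ∈ ℂⁿ, there exists A ∈ U(n) with i·diag(λ) + (iα/2)·zz* = A·(i·diag(μ))·A* if and only if (|z_1|², …, |z_n|²)ᵀ = (2/α)·B_{λ,μ}⁻¹·V_{λ,μ}. In other words, the set F_μ = { z ∈ ℂⁿ : U_λ + (α/2)·z×z ∈ O^K_μ } equals { z ∈ ℂⁿ : (|z_1|²,…,|z_n|²)ᵀ = (2/α)·B_{λ,μ}⁻¹·V_{λ,μ} }. (Description of F_μ in the proof of Theorem 3.) -/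

import Mathlib

open Matrix Complex Finset

/-- The outer matrix `z w*` with `(l,j)` entry `z l * conj (w j)`. -/
noncomputable def outerMat {n : ℕ} (z w : Fin n → ℂ) : Matrix (Fin n) (Fin n) ℂ :=
  Matrix.of fun l j => z l * (starRingEnd ℂ) (w j)

/-- The matrix `B_{λ,μ}` with `(i,j)` entry `∏_{k ≠ j} (μ_i − λ_k)`. -/
noncomputable def Bmat {n : ℕ} (lam mu : Fin n → ℝ) : Matrix (Fin n) (Fin n) ℝ :=
  Matrix.of fun i j => ∏ k ∈ Finset.univ.erase j, (mu i - lam k)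

/-- The vector `V_{λ,μ}` with `i`-th entry `∏ₖ (μ_i − λ_k)`. -/
noncomputable def Vvec {n : ℕ} (lam mu : Fin n → ℝ) : Fin n → ℝ :=
  fun i => ∏ k, (mu i - lam k)

/-!
Dividing by `i`, the condition says that the Hermitian matrix `H = diag(λ) + (α/2) z z*` is
unitarily conjugate to `diag(μ)`. By the spectral theorem, two Hermitian matrices are unitarily
conjugate iff they have the same characteristic polynomial, and since the `μᵢ` are distinct
(`B_{λ,μ}` has no two equal rows) this means that `χ_H` vanishes at every `μᵢ`. The matrix
determinant lemma gives `χ_H(x) = ∏ₖ (x - λₖ) - (α/2) ∑ⱼ |zⱼ|² ∏_{k ≠ j} (x - λₖ)`, so these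
conditions form the linear system `V_{λ,μ} = (α/2) B_{λ,μ} (|zⱼ|²)ⱼ`.
-/

open Polynomial

namespace Matrix

variable {n K : Type*} [Fintype n] [DecidableEq n] [Field K]

theorem det_diagonal_add_vecMulVec {d : n → K} (hd : ∀ i, d i ≠ 0) (u v : n → K) :
    (diagonal d + vecMulVec u v).det
      = ∏ i, d i + ∑ j, u j * v j * ∏ k ∈ univ.erase j, d k := by
  have hfactor : diagonal d + vecMulVec u v = diagonal d * (1 + vecMulVec (d⁻¹ * u) v) := by
    ext i j
    have hdi := hd i
    rcases eq_or_ne i j with rfl | hij <;> simp [*, vecMulVec_apply, diagonal_mul] <;> field_simp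
  rw [hfactor, det_mul, det_diagonal, vecMulVec_eq Unit, det_one_add_replicateCol_mul_replicateRow,
    mul_add, mul_one, dotProduct, Finset.mul_sum]
  congr 1
  refine Finset.sum_congr rfl fun j _ => ?_
  rw [← Finset.mul_prod_erase univ d (mem_univ j), Pi.mul_apply, Pi.inv_apply]
  field_simp [hd j]

theorem charpoly_diagonal_add_vecMulVec [Infinite K] (l u v : n → K) :
    (diagonal l + vecMulVec u v).charpoly
      = ∏ k, (X - C (l k)) - ∑ j, C (u j * v j) * ∏ k ∈ univ.erase j, (X - C (l k)) := by
  -- both sides agree off the finitely many `l k`, where the invertible case applies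
  refine Polynomial.eq_of_infinite_eval_eq _ _ ((Set.finite_range l).infinite_compl.mono ?_)
  rintro x hx
  have hx' : ∀ k, x - l k ≠ 0 := fun k h => hx ⟨k, (sub_eq_zero.1 h).symm⟩
  have hshift : scalar n x - (diagonal l + vecMulVec u v)
      = diagonal (fun k => x - l k) + vecMulVec (-u) v := by
    ext i j
    rcases eq_or_ne i j with rfl | hij <;> simp [*, vecMulVec_apply]; ring
  rw [Set.mem_ofPred_eq, eval_charpoly, hshift, det_diagonal_add_vecMulVec hx']
  simp [sub_eq_add_neg, eval_finsetSum, eval_prod]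

theorem charpoly_unitary_conj {R : Type*} [CommRing R] [StarRing R] (U : unitaryGroup n R)
    (M : Matrix n n R) :
    ((U : Matrix n n R) * M * star (U : Matrix n n R)).charpoly = M.charpoly := by
  rw [charpoly_mul_comm, ← Matrix.mul_assoc, UnitaryGroup.star_mul_self, Matrix.one_mul]

theorem IsHermitian.exists_unitary_conj_of_charpoly_eq {𝕜 : Type*} [RCLike 𝕜]
    {A B : Matrix n n 𝕜} (hA : A.IsHermitian) (hB : B.IsHermitian) (h : A.charpoly = B.charpoly) :
    ∃ U : unitaryGroup n 𝕜, A = (U : Matrix n n 𝕜) * B * star (U : Matrix n n 𝕜) := by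
  have hA' := hA.spectral_theorem
  have hB' := hB.spectral_theorem
  rw [Unitary.conjStarAlgAut_apply] at hA' hB'
  -- `A` and `B` have the same sorted eigenvalues, hence are conjugate to the same diagonal matrix
  rw [(hA.eigenvalues_eq_eigenvalues_iff hB).2 h] at hA'
  generalize (diagonal (RCLike.ofReal ∘ hB.eigenvalues) : Matrix n n 𝕜) = D at hA' hB'
  generalize hA.eigenvectorUnitary = V at hA'
  generalize hB.eigenvectorUnitary = W at hB'
  refine ⟨V * W⁻¹, ?_⟩
  have hW : star (W : Matrix n n 𝕜) * W = 1 := UnitaryGroup.star_mul_self W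
  calc A = (V : Matrix n n 𝕜) * (star (W : Matrix n n 𝕜) * W) * D
        * (star (W : Matrix n n 𝕜) * W) * star (V : Matrix n n 𝕜) := by
          rw [hA', hW, Matrix.mul_one, Matrix.mul_one]
    _ = _ := by
      simp only [hB', UnitaryGroup.mul_val, UnitaryGroup.inv_val, star_mul, star_star,
        Matrix.mul_assoc]

theorem IsHermitian.exists_unitary_conj_iff_charpoly_eq {𝕜 : Type*} [RCLike 𝕜]
    {A B : Matrix n n 𝕜} (hA : A.IsHermitian) (hB : B.IsHermitian) :
    (∃ U : unitaryGroup n 𝕜, A = (U : Matrix n n 𝕜) * B * star (U : Matrix n n 𝕜))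
      ↔ A.charpoly = B.charpoly :=
  ⟨fun ⟨U, hU⟩ => hU ▸ charpoly_unitary_conj U B, hA.exists_unitary_conj_of_charpoly_eq hB⟩

theorem mulVec_eq_iff_eq_inv_mulVec {R : Type*} [CommRing R] {A : Matrix n n R}
    (hA : IsUnit A.det) {v w : n → R} : A *ᵥ w = v ↔ w = A⁻¹ *ᵥ v := by
  constructor
  · rintro rfl
    rw [mulVec_mulVec, nonsing_inv_mul _ hA, one_mulVec]
  · rintro rfl
    rw [mulVec_mulVec, mul_nonsing_inv _ hA, one_mulVec]

end Matrix

theorem Polynomial.Monic.eq_prod_X_sub_C_iff {R ι : Type*} [CommRing R] [IsDomain R] [Fintype ι]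
    {p : R[X]} (hp : p.Monic) (hdeg : p.natDegree = Fintype.card ι) {v : ι → R}
    (hv : Function.Injective v) : p = ∏ i, (X - C (v i)) ↔ ∀ i, p.eval (v i) = 0 := by
  have hroot : ∀ i, (∏ j, (X - C (v j))).eval (v i) = 0 := fun i => by
    rw [eval_prod]
    exact prod_eq_zero (mem_univ i) (by simp)
  refine ⟨fun h i => h ▸ hroot i, fun h => ?_⟩
  have hq : (∏ i, (X - C (v i))).Monic := monic_prod_of_monic _ _ fun i _ => monic_X_sub_C _
  have hqdeg : (∏ i, (X - C (v i))).natDegree = Fintype.card ι := by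
    rw [natDegree_prod_of_monic _ _ fun i _ => monic_X_sub_C _]
    simp
  refine eq_of_degree_sub_lt_of_eval_index_eq univ hv.injOn ?_ fun i _ => by rw [h, hroot]
  calc (p - ∏ i, (X - C (v i))).degree < p.degree :=
        degree_sub_lt_left (by rw [degree_eq_natDegree hp.ne_zero, degree_eq_natDegree hq.ne_zero,
          hdeg, hqdeg]) hp.ne_zero (by rw [hp.leadingCoeff, hq.leadingCoeff])
    _ = #univ := by rw [degree_eq_natDegree hp.ne_zero, hdeg, card_univ]

theorem outerMat_eq_vecMulVec {n : ℕ} (z w : Fin n → ℂ) : outerMat z w = vecMulVec z (star w) :=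
  rfl

theorem injective_of_isUnit_det_Bmat {n : ℕ} {lam mu : Fin n → ℝ}
    (hB : IsUnit (Bmat lam mu).det) : Function.Injective mu := by
  intro i j hij
  by_contra hne
  have hrow : Bmat lam mu i = Bmat lam mu j := by
    ext k
    simp [Bmat, hij]
  exact not_isUnit_zero (det_zero_of_row_eq hne hrow ▸ hB)

theorem isHermitian_diagonal_add_smul_outerMat {n : ℕ} (lam : Fin n → ℝ) (c : ℝ)
    (z : Fin n → ℂ) :
    (diagonal (fun i => (lam i : ℂ)) + (c : ℂ) • outerMat z z).IsHermitian := by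
  refine (isHermitian_diagonal_iff.2 fun i => conj_ofReal _).add (IsHermitian.smul ?_ ?_)
  · rw [outerMat_eq_vecMulVec, IsHermitian, conjTranspose_vecMulVec, star_star]
  · simp [IsSelfAdjoint]

theorem eval_charpoly_diagonal_add_smul_outerMat {n : ℕ} (lam mu : Fin n → ℝ) (α : ℝ)
    (z : Fin n → ℂ) (i : Fin n) :
    (diagonal (fun i => (lam i : ℂ)) + ((α : ℂ) / 2) • outerMat z z).charpoly.eval (mu i : ℂ)
      = ((Vvec lam mu i - α / 2 * (Bmat lam mu *ᵥ fun j => normSq (z j)) i : ℝ) : ℂ) := by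
  rw [outerMat_eq_vecMulVec, ← smul_vecMulVec, charpoly_diagonal_add_vecMulVec]
  simp only [Vvec, Bmat, mulVec, dotProduct]
  simp [eval_prod, eval_finsetSum, Finset.mul_sum]
  refine sum_congr rfl fun j _ => ?_
  rw [← mul_conj]
  ring

theorem Fmu_description_general {n : ℕ} (lam mu : Fin n → ℝ)
    (α : ℝ) (hα : α ≠ 0) (hB : IsUnit (Bmat lam mu).det) :
    ∀ z : Fin n → ℂ,
      (∃ A : Matrix.unitaryGroup (Fin n) ℂ,
        Complex.I • Matrix.diagonal (fun i => ((lam i : ℝ) : ℂ))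
            + ((Complex.I * (α : ℂ)) / 2) • outerMat z z
          = (A : Matrix (Fin n) (Fin n) ℂ) *
              (Complex.I • Matrix.diagonal fun i => ((mu i : ℝ) : ℂ)) *
              star (A : Matrix (Fin n) (Fin n) ℂ)) ↔
      (fun j => Complex.normSq (z j))
        = (2 / α) • (Bmat lam mu)⁻¹.mulVec (Vvec lam mu) := by
  intro z
  set H := diagonal (fun i => (lam i : ℂ)) + ((α : ℂ) / 2) • outerMat z z
  set D : Matrix (Fin n) (Fin n) ℂ := diagonal fun i => (mu i : ℂ)
  have hH : H.IsHermitian := by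
    simpa only [ofReal_div, ofReal_ofNat] using isHermitian_diagonal_add_smul_outerMat lam (α / 2) z
  have hD : D.IsHermitian := isHermitian_diagonal_iff.2 fun i => Complex.conj_ofReal _
  have hscale (A : unitaryGroup (Fin n) ℂ) :
      I • diagonal (fun i => (lam i : ℂ)) + (I * α / 2) • outerMat z z
          = (A : Matrix (Fin n) (Fin n) ℂ) * (I • D) * star (A : Matrix (Fin n) (Fin n) ℂ)
        ↔ H = (A : Matrix (Fin n) (Fin n) ℂ) * D * star (A : Matrix (Fin n) (Fin n) ℂ) := by
    rw [mul_div_assoc, ← smul_smul, ← smul_add, Matrix.mul_smul, Matrix.smul_mul]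
    exact (smul_right_injective _ I_ne_zero).eq_iff
  calc _ ↔ ∃ A : unitaryGroup (Fin n) ℂ, H = A * D * star (A : Matrix (Fin n) (Fin n) ℂ) :=
        exists_congr hscale
    _ ↔ H.charpoly = D.charpoly := hH.exists_unitary_conj_iff_charpoly_eq hD
    _ ↔ ∀ i, H.charpoly.eval (mu i : ℂ) = 0 := by
        rw [charpoly_diagonal]
        exact H.charpoly_monic.eq_prod_X_sub_C_iff (by simp [charpoly_natDegree_eq_dim])
          (ofReal_injective.comp (injective_of_isUnit_det_Bmat hB))
    _ ↔ Bmat lam mu *ᵥ (fun j => normSq (z j)) = (2 / α) • Vvec lam mu := by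
        simp only [H, eval_charpoly_diagonal_add_smul_outerMat, ofReal_eq_zero, sub_eq_zero,
          funext_iff, Pi.smul_apply, smul_eq_mul]
        refine forall_congr' fun i => ?_
        field_simp
        exact eq_comm
    _ ↔ _ := by rw [← mulVec_smul, mulVec_eq_iff_eq_inv_mulVec hB]

/-- description of `F_μ` in the proof of Theorem 3: if `B_{λ,μ}`
is invertible and `α ≠ 0`, then `i diag(λ) + (i α/2) z z*` is unitarily
conjugate to `i diag(μ)` iff `(|z₁|²,…,|zₙ|²)ᵀ = (2/α) B_{λ,μ}⁻¹ V_{λ,μ}`. -/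
theorem Fmu_description {n : ℕ} (hn : 1 ≤ n) (lam mu : Fin n → ℝ)
    (α : ℝ) (hα : α ≠ 0) (hB : IsUnit (Bmat lam mu).det) :
    ∀ z : Fin n → ℂ,
      (∃ A : Matrix.unitaryGroup (Fin n) ℂ,
        Complex.I • Matrix.diagonal (fun i => ((lam i : ℝ) : ℂ))
            + ((Complex.I * (α : ℂ)) / 2) • outerMat z z
          = (A : Matrix (Fin n) (Fin n) ℂ) *
              (Complex.I • Matrix.diagonal fun i => ((mu i : ℝ) : ℂ)) *
              star (A : Matrix (Fin n) (Fin n) ℂ)) ↔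
      (fun j => Complex.normSq (z j))
        = (2 / α) • (Bmat lam mu)⁻¹.mulVec (Vvec lam mu) :=
  Fmu_description_general lam mu α hα hB
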